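/- Let N ≥ 1 and let ψ be a unit vector in the N-qubit space ℂ^{2^N} with ⟨S_y⟩_ψ = 0. Set C = ⟨S_x⟩_ψ/(N/2) and ζ² = ⟨S_y²⟩_ψ/(N/4) (one has C² ≤ 1). If ζ² < (1/2)(1 − √(1 − C²)), then 4 Var_ψ(S_z) > 2N; that is, any pure state violating the two-setting Bell-correlation witness has quantum Fisher information F(ψ, S_z) exceeding 2N, twice the separable-state bound. -/

import Mathlib

open Matrix Finset

/-- Pauli matrix σx. -/
def σx : Matrix (Fin 2) (Fin 2) ℂ := !![0, 1; 1, 0]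

/-- Pauli matrix σy. -/
def σy : Matrix (Fin 2) (Fin 2) ℂ := !![0, -Complex.I; Complex.I, 0]

/-- Pauli matrix σz. -/
def σz : Matrix (Fin 2) (Fin 2) ℂ := !![1, 0; 0, -1]

/-- The single-qubit operator `M` acting on the `i`-th tensor factor of the
`N`-qubit space `ℂ^{2^N}` (identity on all other factors). -/
def siteOp {N : ℕ} (M : Matrix (Fin 2) (Fin 2) ℂ) (i : Fin N) :
    Matrix (Fin N → Fin 2) (Fin N → Fin 2) ℂ :=
  Matrix.of fun x y => M (x i) (y i) * ∏ j ∈ univ.erase i, if x j = y j then 1 else 0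

/-- The collective spin operator `(1/2) Σᵢ M⁽ⁱ⁾`. -/
noncomputable def collSpin {N : ℕ} (M : Matrix (Fin 2) (Fin 2) ℂ) :
    Matrix (Fin N → Fin 2) (Fin N → Fin 2) ℂ :=
  (2 : ℂ)⁻¹ • ∑ i : Fin N, siteOp M i

/-- Expectation `⟨ψ, A ψ⟩` (real part). -/
noncomputable def expval {N : ℕ} (A : Matrix (Fin N → Fin 2) (Fin N → Fin 2) ℂ)
    (ψ : (Fin N → Fin 2) → ℂ) : ℝ :=
  (star ψ ⬝ᵥ A.mulVec ψ).re

/-- Variance `⟨A²⟩_ψ − ⟨A⟩_ψ²`. -/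
noncomputable def variance {N : ℕ} (A : Matrix (Fin N → Fin 2) (Fin N → Fin 2) ℂ)
    (ψ : (Fin N → Fin 2) → ℂ) : ℝ :=
  expval (A * A) ψ - (expval A ψ) ^ 2


/-!
Robertson's uncertainty relation for `[S_y, S_z] = i S_x` gives
`⟨S_x⟩² ≤ 4 ⟨S_y²⟩ Var(S_z)`. Since `1 - √(1 - C²) ≤ C²`, violating the witness forces
`ζ² < C²/2`, i.e. `2N ⟨S_y²⟩ < ⟨S_x⟩²`, and the two inequalities together give
`4 Var(S_z) > 2N`.
-/

section Uncertainty

variable {ι : Type*} [Fintype ι]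

theorem norm_star_dotProduct_sq_le (u v : ι → ℂ) :
    ‖star u ⬝ᵥ v‖ ^ 2 ≤ (star u ⬝ᵥ u).re * (star v ⬝ᵥ v).re := by
  have h := inner_mul_inner_self_le (𝕜 := ℂ) (WithLp.toLp 2 u) (WithLp.toLp 2 v)
  simp only [EuclideanSpace.inner_toLp_toLp, dotProduct_comm _ (star _)] at h
  rwa [star_dotProduct v u, norm_star, ← sq] at h

theorem star_dotProduct_mul_mulVec_of_isHermitian {A : Matrix ι ι ℂ} (hA : A.IsHermitian)
    (B : Matrix ι ι ℂ) (ψ : ι → ℂ) :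
    star ψ ⬝ᵥ (A * B) *ᵥ ψ = star (A *ᵥ ψ) ⬝ᵥ B *ᵥ ψ := by
  rw [star_mulVec, hA.eq, ← mulVec_mulVec, dotProduct_mulVec]

theorem re_star_dotProduct_mulVec_sq_le {A B C : Matrix ι ι ℂ} (hA : A.IsHermitian)
    (hB : B.IsHermitian) (hAB : A * B - B * A = Complex.I • C) (ψ : ι → ℂ) :
    (star ψ ⬝ᵥ C *ᵥ ψ).re ^ 2 ≤
      4 * (star ψ ⬝ᵥ (A * A) *ᵥ ψ).re * (star ψ ⬝ᵥ (B * B) *ᵥ ψ).re := by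
  set z := star (A *ᵥ ψ) ⬝ᵥ B *ᵥ ψ
  have hBA : star ψ ⬝ᵥ (B * A) *ᵥ ψ = star z := by
    rw [star_dotProduct_mul_mulVec_of_isHermitian hB, star_dotProduct]
  -- `i ⟨C⟩ = ⟨[A, B]⟩ = z - z̄ = 2 i Im z`, and Cauchy–Schwarz bounds `|z|²`.
  have hC : star ψ ⬝ᵥ C *ᵥ ψ = (2 * z.im : ℝ) := by
    have h := congrArg (fun M => star ψ ⬝ᵥ M *ᵥ ψ) hAB
    simp only [sub_mulVec, dotProduct_sub, smul_mulVec, dotProduct_smul, smul_eq_mul,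
      star_dotProduct_mul_mulVec_of_isHermitian hA, hBA] at h
    rw [← mul_right_inj' Complex.I_ne_zero, ← h, Complex.star_def, Complex.sub_conj]
    push_cast
    ring
  have hCS := norm_star_dotProduct_sq_le (A *ᵥ ψ) (B *ᵥ ψ)
  rw [hC, Complex.ofReal_re, star_dotProduct_mul_mulVec_of_isHermitian hA,
    star_dotProduct_mul_mulVec_of_isHermitian hB]
  nlinarith [Complex.sq_norm z, Complex.normSq_apply z, sq_nonneg z.re]

end Uncertainty

section Qubits

variable {N : ℕ}

theorem siteOp_apply (M : Matrix (Fin 2) (Fin 2) ℂ) (i : Fin N) (x y : Fin N → Fin 2) :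
    siteOp M i x y = if Function.update x i (y i) = y then M (x i) (y i) else 0 := by
  simp [siteOp, prod_boole, Function.update_eq_iff]

theorem siteOp_mulVec (M : Matrix (Fin 2) (Fin 2) ℂ) (i : Fin N) (v : (Fin N → Fin 2) → ℂ)
    (x : Fin N → Fin 2) :
    (siteOp M i *ᵥ v) x = ∑ a, M (x i) a * v (Function.update x i a) := by
  have h (y : Fin N → Fin 2) : siteOp M i x y * v y =
      ∑ a, if Function.update x i a = y then M (x i) a * v y else 0 := by
    rw [siteOp_apply, Finset.sum_eq_single (y i)]
    · split_ifs <;> simp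
    · rintro a - ha
      rw [if_neg]
      rintro rfl
      simp at ha
    · simp
  simp only [mulVec, dotProduct, h]
  rw [Finset.sum_comm]
  simp

theorem siteOp_mul_siteOp (M M' : Matrix (Fin 2) (Fin 2) ℂ) (i : Fin N) :
    siteOp M i * siteOp M' i = siteOp (M * M') i := by
  refine ext_iff_mulVec.2 fun v => funext fun x => ?_
  simp only [← mulVec_mulVec, siteOp_mulVec, Function.update_self, Function.update_idem,
    mul_apply, mul_sum, sum_mul, mul_assoc]
  exact Finset.sum_comm

theorem siteOp_commute (M M' : Matrix (Fin 2) (Fin 2) ℂ) {i j : Fin N} (hij : i ≠ j) :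
    Commute (siteOp M i) (siteOp M' j) := by
  refine ext_iff_mulVec.2 fun v => funext fun x => ?_
  simp only [← mulVec_mulVec, siteOp_mulVec, Function.update_of_ne hij,
    Function.update_of_ne hij.symm, mul_sum]
  rw [Finset.sum_comm]
  refine Finset.sum_congr rfl fun a _ => Finset.sum_congr rfl fun b _ => ?_
  rw [Function.update_comm hij]
  ring

theorem siteOp_sub (M M' : Matrix (Fin 2) (Fin 2) ℂ) (i : Fin N) :
    siteOp (M - M') i = siteOp M i - siteOp M' i := by
  ext x y
  simp [siteOp, sub_mul]

theorem siteOp_smul (c : ℂ) (M : Matrix (Fin 2) (Fin 2) ℂ) (i : Fin N) :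
    siteOp (c • M) i = c • siteOp M i := by
  ext x y
  simp [siteOp, mul_assoc]

theorem siteOp_conjTranspose (M : Matrix (Fin 2) (Fin 2) ℂ) (i : Fin N) :
    (siteOp M i)ᴴ = siteOp Mᴴ i := by
  ext x y
  have h : Function.update y i (x i) = x ↔ Function.update x i (y i) = y := by
    simp only [Function.update_eq_iff, true_and]
    exact forall₂_congr fun _ _ => eq_comm
  simp only [conjTranspose_apply, siteOp_apply, h, apply_ite star, star_zero]

theorem siteOp_commutator {M M' M'' : Matrix (Fin 2) (Fin 2) ℂ} {c : ℂ}
    (h : M * M' - M' * M = c • M'') (i j : Fin N) :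
    siteOp M i * siteOp M' j - siteOp M' j * siteOp M i =
      if i = j then c • siteOp M'' i else 0 := by
  split_ifs with hij
  · rw [← hij, siteOp_mul_siteOp, siteOp_mul_siteOp, ← siteOp_sub, h, siteOp_smul]
  · rw [(siteOp_commute M M' hij).eq, sub_self]

theorem collSpin_commutator {M M' M'' : Matrix (Fin 2) (Fin 2) ℂ} {c : ℂ}
    (h : M * M' - M' * M = c • M'') :
    collSpin (N := N) M * collSpin M' - collSpin M' * collSpin M = (c / 2) • collSpin M'' := by
  simp only [collSpin, smul_mul_smul, sum_mul_sum, ← smul_sub]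
  rw [sum_comm (f := fun i j => siteOp M' i * siteOp M j)]
  simp only [← sum_sub_distrib, siteOp_commutator h, sum_ite_eq, mem_univ, if_true, ← smul_sum,
    smul_smul]
  congr 1
  ring

theorem collSpin_isHermitian {M : Matrix (Fin 2) (Fin 2) ℂ} (hM : M.IsHermitian) :
    (collSpin (N := N) M).IsHermitian := by
  simp only [IsHermitian, collSpin, conjTranspose_smul, conjTranspose_sum, siteOp_conjTranspose,
    hM.eq, star_inv₀, star_ofNat]

open scoped ComplexOrder in
theorem expval_mul_self_nonneg {A : Matrix (Fin N → Fin 2) (Fin N → Fin 2) ℂ}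
    (hA : A.IsHermitian) (ψ : (Fin N → Fin 2) → ℂ) : 0 ≤ expval (A * A) ψ := by
  rw [expval, star_dotProduct_mul_mulVec_of_isHermitian hA]
  exact (Complex.nonneg_iff.1 (dotProduct_star_self_nonneg _)).1

theorem expval_sub_expval_mul_self (A : Matrix (Fin N → Fin 2) (Fin N → Fin 2) ℂ)
    {ψ : (Fin N → Fin 2) → ℂ} (hψ : star ψ ⬝ᵥ ψ = 1) :
    expval ((A - (expval A ψ : ℂ) • 1) * (A - (expval A ψ : ℂ) • 1)) ψ = variance A ψ := by
  simp only [expval, variance, sub_mul, mul_sub, smul_mul_assoc, mul_smul_comm, one_mul, mul_one,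
    sub_mulVec, smul_mulVec, one_mulVec, dotProduct_sub, dotProduct_smul, hψ, smul_eq_mul,
    Complex.sub_re, Complex.mul_re, Complex.ofReal_re, Complex.ofReal_im]
  ring

theorem sq_expval_le_four_mul_expval_mul_self_mul_variance
    {A B C : Matrix (Fin N → Fin 2) (Fin N → Fin 2) ℂ} (hA : A.IsHermitian) (hB : B.IsHermitian)
    (hAB : A * B - B * A = Complex.I • C) {ψ : (Fin N → Fin 2) → ℂ} (hψ : star ψ ⬝ᵥ ψ = 1) :
    expval C ψ ^ 2 ≤ 4 * expval (A * A) ψ * variance B ψ := by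
  set B₀ := B - (expval B ψ : ℂ) • 1
  have hB₀ : B₀.IsHermitian := hB.sub (isHermitian_one.smul (Complex.conj_ofReal _))
  have hAB₀ : A * B₀ - B₀ * A = Complex.I • C := by
    rw [← hAB]
    simp only [B₀, mul_sub, sub_mul, mul_smul_comm, smul_mul_assoc, mul_one, one_mul]
    abel
  rw [← expval_sub_expval_mul_self B hψ]
  exact re_star_dotProduct_mulVec_sq_le hA hB₀ hAB₀ ψ

end Qubits

theorem isHermitian_σy : σy.IsHermitian := by
  ext i j; fin_cases i <;> fin_cases j <;> simp [σy]

theorem isHermitian_σz : σz.IsHermitian := by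
  ext i j; fin_cases i <;> fin_cases j <;> simp [σz]

theorem σy_mul_σz_sub_σz_mul_σy : σy * σz - σz * σy = (2 * Complex.I) • σx := by
  ext i j; fin_cases i <;> fin_cases j <;> simp [σx, σy, σz] <;> ring

theorem one_sub_sqrt_one_sub_le {t : ℝ} (ht : 0 ≤ t) : 1 - √(1 - t) ≤ t := by
  rcases le_total t 1 with ht1 | ht1
  · have h := Real.sqrt_le_sqrt (mul_le_of_le_one_left (sub_nonneg.2 ht1) (sub_le_self 1 ht))
    rw [Real.sqrt_mul_self (sub_nonneg.2 ht1)] at h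
    linarith
  · rw [Real.sqrt_eq_zero_of_nonpos (sub_nonpos.2 ht1)]
    linarith

theorem qfi_gt_twice_shot_noise_of_witness_violation_general (N : ℕ) (hN : 1 ≤ N)
    (ψ : (Fin N → Fin 2) → ℂ) (hψ : star ψ ⬝ᵥ ψ = 1)
    (C ζsq : ℝ)
    (hC : C = expval (collSpin σx) ψ / (N / 2))
    (hζ : ζsq = expval (collSpin σy * collSpin σy) ψ / (N / 4))
    (hviol : ζsq < (1 / 2) * (1 - Real.sqrt (1 - C ^ 2))) :
    2 * N < 4 * variance (collSpin σz) ψ := by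
  have hcomm : collSpin σy * collSpin σz - collSpin σz * collSpin σy =
      Complex.I • collSpin (N := N) σx := by
    rw [collSpin_commutator σy_mul_σz_sub_σz_mul_σy]
    norm_num
  have hrobertson := sq_expval_le_four_mul_expval_mul_self_mul_variance
    (collSpin_isHermitian isHermitian_σy) (collSpin_isHermitian isHermitian_σz) hcomm hψ
  have hSy2 := expval_mul_self_nonneg (collSpin_isHermitian (N := N) isHermitian_σy) ψ
  have hwitness : ζsq < C ^ 2 / 2 := by linarith [one_sub_sqrt_one_sub_le (sq_nonneg C)]
  have hN0 : (0 : ℝ) < N := by exact_mod_cast hN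
  subst hC hζ
  have hviol' : 2 * N * expval (collSpin σy * collSpin σy) ψ < expval (collSpin σx) ψ ^ 2 := by
    field_simp at hwitness
    linarith
  nlinarith

/-- Any pure state violating the two-setting Bell-correlation witness
`ζ² ≥ (1/2)(1 − √(1 − C²))` has QFI `F(ψ,S_z) = 4 Var_ψ(S_z) > 2N`. -/
theorem qfi_gt_twice_shot_noise_of_witness_violation (N : ℕ) (hN : 1 ≤ N)
    (ψ : (Fin N → Fin 2) → ℂ) (hψ : star ψ ⬝ᵥ ψ = 1)
    (hSy : expval (collSpin σy) ψ = 0)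
    (C ζsq : ℝ)
    (hC : C = expval (collSpin σx) ψ / (N / 2))
    (hζ : ζsq = expval (collSpin σy * collSpin σy) ψ / (N / 4))
    (hviol : ζsq < (1 / 2) * (1 - Real.sqrt (1 - C ^ 2))) :
    2 * N < 4 * variance (collSpin σz) ψ :=
  qfi_gt_twice_shot_noise_of_witness_violation_general N hN ψ hψ C ζsq hC hζ hviol
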